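/- There do not exist an integer n ≥ 1 and positive real numbers α₁, …, αₙ and τ₁, …, τₙ such that f(t) = Σᵢ₌₁ⁿ αᵢ · h(t/τᵢ) for all t > 0. That is, the slope gap distribution of the balanced ten-tile origami is not a finite sum of scaled Hall distributions. -/

import Mathlib

/-- The inverse hyperbolic tangent. -/
noncomputable def artanh (x : ℝ) : ℝ := (1 / 2) * Real.log ((1 + x) / (1 - x))

/-- `θ(t) = artanh √(1 - 1/t)`. -/
noncomputable def tenTheta (t : ℝ) : ℝ := artanh (Real.sqrt (1 - 1 / t))

/-- The piecewise function `g` with `f(t) = (8/(33 t²)) g(t)` for `t ≥ 1`. -/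
noncomputable def tenG (t : ℝ) : ℝ :=
  if t < 2 then 4 * Real.log t
  else if t < 3 then 12 * Real.log t - 8 * Real.log 2
  else if t < 4 then 15 * Real.log t - 8 * Real.log 2 - 3 * Real.log 3
  else if t < 16 / 3 then
    16 * Real.log t - 10 * Real.log 2 - 3 * Real.log 3 - 8 * tenTheta (t / 4)
  else if t < 6 then
    16 * Real.log t - 10 * Real.log 2 - 3 * Real.log 3 - 8 * tenTheta (t / 4)
      - 4 * tenTheta (3 * t / 16)
  else if t < 8 then
    12 * Real.log t - 8 * Real.log 2 + Real.log 3 - 8 * tenTheta (t / 4)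
      - 4 * tenTheta (t / 6)
  else if t < 9 then
    10 * Real.log t - 2 * Real.log 2 - Real.log 3 - 8 * tenTheta (t / 4)
      - 12 * tenTheta (t / 8)
  else if t < 32 / 3 then
    10 * Real.log t - 4 * Real.log 2 - Real.log 3 - 8 * tenTheta (t / 4)
      - 8 * tenTheta (t / 8)
  else if t < 12 then
    10 * Real.log t - 4 * Real.log 2 - Real.log 3 - 8 * tenTheta (t / 4)
      - 8 * tenTheta (t / 8) - 4 * tenTheta (3 * t / 32)
  else if t < 16 then
    9 * Real.log t - 4 * Real.log 2 - 8 * tenTheta (t / 4) - 8 * tenTheta (t / 8)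
      - 4 * tenTheta (t / 12)
  else
    9 * Real.log t - 4 * Real.log 2 - Real.log 3 - 8 * tenTheta (t / 4)
      - 8 * tenTheta (t / 8) - 2 * tenTheta (t / 12)

/-- The slope gap distribution pdf of the balanced ten-tile origami. -/
noncomputable def tenTilePdf (t : ℝ) : ℝ :=
  if t < 1 then 0 else 8 / (33 * t ^ 2) * tenG t

/-- The Hall distribution pdf. -/
noncomputable def hallPdf (t : ℝ) : ℝ :=
  if t < 1 then 0
  else if t < 4 then 2 * Real.log t / t ^ 2
  else 2 * Real.log t / t ^ 2 - 4 / t ^ 2 * artanh (Real.sqrt (1 - 4 / t))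


/-!
Suppose `f = ∑ αᵢ h(·/τᵢ)`. On `(0, 2)` we have `f = (16/33) h`, and since `h` vanishes on
`(0, 1]` and is positive beyond, comparing the two sides just above `1` and just above each
`τᵢ` forces every `τᵢ ≥ 1`, total weight `16/33` at `τ = 1`, and every other `τᵢ ≥ 2`.
Just to the right of `16/3` every Hall term except `h(t)` itself then equals
`(a log t + b) / t²`, so matching the `θ(3t/16)` term of `f` gives `θ(s) = K log s + C`
for `s` slightly above `1`. This is impossible: continuity at `1` forces `C = 0`, but `θ(s)`
decays only like `√(s - 1)`, more slowly than `K log s`.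
-/

open Filter Topology Set
open Real (log sqrt)

lemma half_le_artanh {x : ℝ} (h0 : 0 ≤ x) (h1 : x < 1) : x / 2 ≤ artanh x := by
  have hlog_sub : log (1 - x) ≤ -x := by
    linarith [Real.log_le_sub_one_of_pos (show 0 < 1 - x by linarith)]
  have hlog_add : 0 ≤ log (1 + x) := Real.log_nonneg (by linarith)
  rw [artanh, Real.log_div (by linarith) (by linarith)]
  linarith

lemma artanh_sqrt {y : ℝ} (h0 : 0 ≤ y) (h1 : y < 1) :
    artanh (sqrt y) = log (1 + sqrt y) - log (1 - y) / 2 := by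
  have hs1 : sqrt y < 1 := (Real.sqrt_lt' one_pos).2 (by rwa [one_pow])
  have hy : 1 - y = (1 - sqrt y) * (1 + sqrt y) := by nlinarith [Real.sq_sqrt h0]
  have hs0 := Real.sqrt_nonneg y
  rw [artanh, hy, Real.log_mul (by linarith) (by linarith),
    Real.log_div (by linarith) (by linarith)]
  ring

lemma tenTheta_div_four (x : ℝ) : tenTheta (x / 4) = artanh (sqrt (1 - 4 / x)) := by
  rw [tenTheta, one_div_div]

lemma sqrt_one_sub_inv_le_two_mul_tenTheta {s : ℝ} (hs : 1 ≤ s) :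
    sqrt (1 - 1 / s) ≤ 2 * tenTheta s := by
  have h1 : 1 - 1 / s < 1 := sub_lt_self 1 (by positivity)
  have := half_le_artanh (Real.sqrt_nonneg _) ((Real.sqrt_lt' one_pos).2 (by rwa [one_pow]))
  rw [tenTheta]
  linarith

lemma tendsto_tenTheta_nhdsGT_one : Tendsto tenTheta (𝓝[>] 1) (𝓝 0) := by
  have hcont : ContinuousAt tenTheta 1 := by
    unfold tenTheta artanh
    fun_prop (disch := norm_num)
  simpa [tenTheta, artanh] using hcont.tendsto.mono_left nhdsWithin_le_nhds

lemma not_eventually_tenTheta_eq (K C : ℝ) :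
    ¬ ∀ᶠ s in 𝓝[>] 1, tenTheta s = K * log s + C := by
  intro h
  have hC : C = 0 := by
    have hlin : ContinuousAt (fun s ↦ K * log s + C) 1 := by fun_prop (disch := norm_num)
    have hlim : Tendsto (fun s ↦ K * log s + C) (𝓝[>] 1) (𝓝 C) := by
      simpa using hlin.tendsto.mono_left nhdsWithin_le_nhds
    exact tendsto_nhds_unique (hlim.congr' (h.mono fun s hs ↦ hs.symm))
      tendsto_tenTheta_nhdsGT_one
  subst hC
  simp only [add_zero] at h
  have hε : (1 : ℝ) < 1 + 1 / (8 * K ^ 2 + 1) := lt_add_of_pos_right 1 (by positivity)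
  obtain ⟨s, hθ, hs1, hsε⟩ := (h.and (Ioo_mem_nhdsGT hε)).exists
  have hsmall : (8 * K ^ 2 + 1) * (s - 1) < 1 :=
    (lt_div_iff₀' (by positivity)).1 (by linarith)
  have hlog0 : 0 ≤ log s := Real.log_nonneg hs1.le
  have hlog : log s ≤ s - 1 := Real.log_le_sub_one_of_pos (by linarith)
  have hsq : 1 - 1 / s ≤ (2 * (K * log s)) ^ 2 :=
    ((Real.sqrt_le_iff).1 (hθ ▸ sqrt_one_sub_inv_le_two_mul_tenTheta hs1.le)).2
  have hlower : (s - 1) / 2 ≤ 1 - 1 / s := by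
    rw [div_le_iff₀ two_pos]
    field_simp
    nlinarith
  nlinarith [mul_le_mul hlog hlog hlog0 (by linarith), sq_nonneg K]

lemma hallPdf_of_le_one {x : ℝ} (hx : x ≤ 1) : hallPdf x = 0 := by
  rcases hx.lt_or_eq with h | rfl
  · simp [hallPdf, h]
  · simp [hallPdf]

lemma hallPdf_of_lt_four {x : ℝ} (h1 : 1 ≤ x) (h4 : x < 4) :
    hallPdf x = 2 * log x / x ^ 2 := by
  rw [hallPdf, if_neg h1.not_gt, if_pos h4]

lemma sq_mul_hallPdf_of_four_le {x : ℝ} (h4 : 4 ≤ x) :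
    x ^ 2 * hallPdf x = 2 * log x - 4 * tenTheta (x / 4) := by
  rw [hallPdf, if_neg (by linarith), if_neg h4.not_gt, tenTheta_div_four]
  field_simp

lemma sq_mul_hallPdf_div {c t : ℝ} (hc : 0 < c) (h1 : c ≤ t) (h4 : t < 4 * c) :
    t ^ 2 * hallPdf (t / c) = 2 * c ^ 2 * (log t - log c) := by
  rw [hallPdf_of_lt_four ((one_le_div hc).2 h1) ((div_lt_iff₀ hc).2 h4),
    Real.log_div (by linarith) hc.ne']
  have : 0 < t := by linarith
  field_simp

/-- For `x ≥ 4`, `x² h(x) = 4 log (2 / (1 + √(1 - 4/x)))`. -/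
lemma hallPdf_pos {x : ℝ} (hx : 1 < x) : 0 < hallPdf x := by
  rcases lt_or_ge x 4 with h4 | h4
  · rw [hallPdf_of_lt_four hx.le h4]
    have := Real.log_pos hx
    positivity
  have hx0 : 0 < x := by linarith
  have hy0 : 0 ≤ 1 - 4 / x := by rw [sub_nonneg, div_le_one hx0]; exact h4
  have hy1 : 1 - 4 / x < 1 := sub_lt_self 1 (by positivity)
  have hroot : log (1 + sqrt (1 - 4 / x)) < log 2 :=
    Real.log_lt_log (by positivity)
      (by linarith [(Real.sqrt_lt' one_pos).2 (show 1 - 4 / x < 1 ^ 2 by rwa [one_pow])])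
  have hlog4 : log (4 / x) = 2 * log 2 - log x := by
    rw [Real.log_div (by norm_num) hx0.ne', show (4 : ℝ) = 2 ^ 2 by norm_num, Real.log_pow]
    push_cast
    ring
  have key : 0 < x ^ 2 * hallPdf x := by
    rw [sq_mul_hallPdf_of_four_le h4, tenTheta_div_four, artanh_sqrt hy0 hy1, sub_sub_cancel,
      hlog4]
    linarith
  exact pos_of_mul_pos_right key (by positivity)

lemma hallPdf_nonneg (x : ℝ) : 0 ≤ hallPdf x := by
  rcases le_or_gt x 1 with h | h
  · rw [hallPdf_of_le_one h]
  · exact (hallPdf_pos h).le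

lemma exists_gt_forall_le_or_le {ι : Type*} [Finite ι] (τ : ι → ℝ) (a : ℝ) :
    ∃ u > a, ∀ i, τ i ≤ a ∨ u ≤ τ i := by
  have : ∀ᶠ t in 𝓝[>] a, ∀ i, τ i ≤ a ∨ t ≤ τ i := eventually_all.2 fun i ↦ by
    rcases le_or_gt (τ i) a with h | h
    · exact .of_forall fun _ ↦ .inl h
    · filter_upwards [Ioo_mem_nhdsGT h] with t ht using .inr ht.2.le
  obtain ⟨u, hu, hau⟩ := (this.and self_mem_nhdsWithin).exists
  exact ⟨u, hau, hu⟩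

section HallSums

variable {ι : Type*} {α τ : ι → ℝ}

lemma sum_hallPdf_eq_zero {s : Finset ι} {t : ℝ} (hτ : ∀ i ∈ s, 0 < τ i)
    (ht : ∀ i ∈ s, t ≤ τ i) : ∑ i ∈ s, α i * hallPdf (t / τ i) = 0 :=
  Finset.sum_eq_zero fun i hi ↦ by
    rw [hallPdf_of_le_one ((div_le_one (hτ i hi)).2 (ht i hi)), mul_zero]

lemma sum_hallPdf_pos {s : Finset ι} {t : ℝ} (hα : ∀ i ∈ s, 0 < α i) (hτ : ∀ i ∈ s, 0 < τ i)
    {j : ι} (hj : j ∈ s) (htj : τ j < t) : 0 < ∑ i ∈ s, α i * hallPdf (t / τ i) :=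
  Finset.sum_pos' (fun i hi ↦ mul_nonneg (hα i hi).le (hallPdf_nonneg _))
    ⟨j, hj, mul_pos (hα j hj) (hallPdf_pos ((one_lt_div (hτ j hj)).2 htj))⟩

lemma sq_mul_sum_hallPdf {s : Finset ι} {t : ℝ} (hτ : ∀ i ∈ s, 0 < τ i)
    (ht : ∀ i ∈ s, τ i ≤ t ∧ t < 4 * τ i) :
    t ^ 2 * ∑ i ∈ s, α i * hallPdf (t / τ i) =
      2 * (∑ i ∈ s, α i * τ i ^ 2) * log t - 2 * ∑ i ∈ s, α i * τ i ^ 2 * log (τ i) := by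
  simp only [Finset.mul_sum, Finset.sum_mul, ← Finset.sum_sub_distrib]
  refine Finset.sum_congr rfl fun i hi ↦ ?_
  rw [mul_left_comm, sq_mul_hallPdf_div (hτ i hi) (ht i hi).1 (ht i hi).2]
  ring

lemma sum_hallPdf_eq_weight_add [Fintype ι] (t : ℝ) :
    ∑ i, α i * hallPdf (t / τ i) =
      (∑ i with τ i = 1, α i) * hallPdf t + ∑ i with τ i ≠ 1, α i * hallPdf (t / τ i) := by
  rw [← Finset.sum_filter_add_sum_filter_not Finset.univ (fun i ↦ τ i = 1), Finset.sum_mul]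
  congr 1
  refine Finset.sum_congr rfl fun i hi ↦ ?_
  rw [(Finset.mem_filter.1 hi).2, div_one]

variable {b c : ℝ}

lemma one_le_of_forall_eq_mul_hallPdf [Fintype ι] (hα : ∀ i, 0 < α i) (hτ : ∀ i, 0 < τ i)
    (hb : 1 ≤ b)
    (hf : ∀ t ∈ Ioo 0 b, c * hallPdf t = ∑ i, α i * hallPdf (t / τ i)) (i : ι) :
    1 ≤ τ i := by
  by_contra! hi
  have hτi := hτ i
  have hzero := hf ((τ i + 1) / 2) ⟨by linarith, by linarith⟩
  rw [hallPdf_of_le_one (by linarith), mul_zero] at hzero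
  exact (sum_hallPdf_pos (fun i _ ↦ hα i) (fun i _ ↦ hτ i) (Finset.mem_univ i)
    (by linarith)).ne hzero

lemma sum_weight_eq_of_forall_eq_mul_hallPdf [Fintype ι] (hτ : ∀ i, 0 < τ i)
    (hτ1 : ∀ i, 1 ≤ τ i) (hb : 1 < b)
    (hf : ∀ t ∈ Ioo 0 b, c * hallPdf t = ∑ i, α i * hallPdf (t / τ i)) :
    ∑ i with τ i = 1, α i = c := by
  obtain ⟨u, hu1, hu⟩ := exists_gt_forall_le_or_le τ 1
  obtain ⟨t, ht1, htub⟩ := exists_between (lt_min hu1 hb)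
  have htu : t ≤ u := (htub.trans_le (min_le_left u b)).le
  have htb : t < b := htub.trans_le (min_le_right u b)
  have hrest : ∑ i with τ i ≠ 1, α i * hallPdf (t / τ i) = 0 := by
    refine sum_hallPdf_eq_zero (fun i _ ↦ hτ i) fun i hi ↦ ?_
    have hne := (Finset.mem_filter.1 hi).2
    rcases hu i with h | h
    · exact absurd (le_antisymm h (hτ1 i)) hne
    · exact htu.trans h
  have heq := hf t ⟨by linarith, htb⟩
  rw [sum_hallPdf_eq_weight_add, hrest, add_zero] at heq
  exact (mul_right_cancel₀ (hallPdf_pos ht1).ne' heq).symm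

lemma eq_one_or_le_of_forall_eq_mul_hallPdf [Fintype ι] (hα : ∀ i, 0 < α i)
    (hτ : ∀ i, 0 < τ i) (hc : ∑ i with τ i = 1, α i = c)
    (hf : ∀ t ∈ Ioo 0 b, c * hallPdf t = ∑ i, α i * hallPdf (t / τ i)) (i : ι) :
    τ i = 1 ∨ b ≤ τ i := by
  by_contra! hi
  have hτi := hτ i
  have heq := hf ((τ i + b) / 2) ⟨by linarith, by linarith⟩
  rw [sum_hallPdf_eq_weight_add, hc] at heq
  have := sum_hallPdf_pos (s := Finset.univ.filter fun i ↦ τ i ≠ 1) (fun i _ ↦ hα i)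
    (fun i _ ↦ hτ i) (Finset.mem_filter.2 ⟨Finset.mem_univ i, hi.1⟩)
    (show τ i < (τ i + b) / 2 by linarith)
  linarith

end HallSums

lemma tenTilePdf_eq_of_lt_two {t : ℝ} (ht : t < 2) : tenTilePdf t = 16 / 33 * hallPdf t := by
  rcases lt_or_ge t 1 with h1 | h1
  · simp [tenTilePdf, hallPdf, h1]
  · rw [tenTilePdf, tenG, if_neg h1.not_gt, if_pos ht, hallPdf_of_lt_four h1 (by linarith)]
    ring

lemma tenTilePdf_of_mem_Ioo {t : ℝ} (ht : t ∈ Ioo (16 / 3) 6) :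
    tenTilePdf t = 8 / (33 * t ^ 2) * (16 * log t - 10 * log 2 - 3 * log 3
      - 8 * tenTheta (t / 4) - 4 * tenTheta (3 * t / 16)) := by
  obtain ⟨h1, h2⟩ := ht
  rw [tenTilePdf, tenG, if_neg (by linarith), if_neg (by linarith), if_neg (by linarith),
    if_neg (by linarith), if_neg (by linarith), if_pos h2]

lemma exists_tenTheta_eq_log_of_scales {ι : Type*} [Fintype ι] {α τ : ι → ℝ}
    (hτ : ∀ i, 0 < τ i) (hτ2 : ∀ i, τ i = 1 ∨ 2 ≤ τ i) (hA : ∑ i with τ i = 1, α i = 16 / 33)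
    (hf : ∀ t : ℝ, 0 < t → tenTilePdf t = ∑ i, α i * hallPdf (t / τ i)) :
    ∃ K C : ℝ, ∀ t ∈ Ioo (16 / 3) 6, (∀ i, τ i ≤ 16 / 3 ∨ t ≤ τ i) →
      tenTheta (3 * t / 16) = K * log t + C := by
  set S := Finset.univ.filter fun i ↦ τ i ≠ 1 ∧ τ i ≤ 16 / 3
  set B := ∑ i ∈ S, α i * τ i ^ 2
  set L := ∑ i ∈ S, α i * τ i ^ 2 * log (τ i)
  refine ⟨3 - 33 / 16 * B, 33 / 16 * L - 5 / 2 * log 2 - 3 / 4 * log 3, fun t ht hgap ↦ ?_⟩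
  obtain ⟨ht1, ht2⟩ := ht
  have hS : t ^ 2 * ∑ i ∈ S, α i * hallPdf (t / τ i) = 2 * B * log t - 2 * L := by
    refine sq_mul_sum_hallPdf (fun i _ ↦ hτ i) fun i hi ↦ ?_
    obtain ⟨hi1, hi⟩ := (Finset.mem_filter.1 hi).2
    have := (hτ2 i).resolve_left hi1
    constructor <;> linarith
  have hsplit : ∑ i with τ i ≠ 1, α i * hallPdf (t / τ i) = ∑ i ∈ S, α i * hallPdf (t / τ i)
      + ∑ i with τ i ≠ 1 ∧ ¬τ i ≤ 16 / 3, α i * hallPdf (t / τ i) := by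
    rw [← Finset.sum_filter_add_sum_filter_not _ (fun i ↦ τ i ≤ 16 / 3), Finset.filter_filter,
      Finset.filter_filter]
  have hrest : ∑ i with τ i ≠ 1 ∧ ¬τ i ≤ 16 / 3, α i * hallPdf (t / τ i) = 0 :=
    sum_hallPdf_eq_zero (fun i _ ↦ hτ i) fun i hi ↦
      (hgap i).resolve_left (Finset.mem_filter.1 hi).2.2
  have heq := hf t (by linarith)
  rw [tenTilePdf_of_mem_Ioo ⟨ht1, ht2⟩, sum_hallPdf_eq_weight_add, hA, hsplit, hrest,
    add_zero] at heq
  have ht0 : t ≠ 0 := by linarith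
  have hmul : 8 / 33 * (16 * log t - 10 * log 2 - 3 * log 3 - 8 * tenTheta (t / 4)
      - 4 * tenTheta (3 * t / 16)) =
        16 / 33 * (2 * log t - 4 * tenTheta (t / 4)) + (2 * B * log t - 2 * L) := by
    calc _ = t ^ 2 * (8 / (33 * t ^ 2) * (16 * log t - 10 * log 2 - 3 * log 3
          - 8 * tenTheta (t / 4) - 4 * tenTheta (3 * t / 16))) := by field_simp
      _ = 16 / 33 * (t ^ 2 * hallPdf t) + t ^ 2 * ∑ i ∈ S, α i * hallPdf (t / τ i) := by
        rw [heq]; ring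
      _ = _ := by rw [sq_mul_hallPdf_of_four_le (by linarith), hS]
  linear_combination (-33 / 32) * hmul

lemma exists_eventually_tenTheta_eq {ι : Type*} [Fintype ι] {α τ : ι → ℝ}
    (hα : ∀ i, 0 < α i) (hτ : ∀ i, 0 < τ i)
    (hf : ∀ t : ℝ, 0 < t → tenTilePdf t = ∑ i, α i * hallPdf (t / τ i)) :
    ∃ K C : ℝ, ∀ᶠ s in 𝓝[>] 1, tenTheta s = K * log s + C := by
  have hf₂ : ∀ t ∈ Ioo 0 2, 16 / 33 * hallPdf t = ∑ i, α i * hallPdf (t / τ i) :=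
    fun t ht ↦ (tenTilePdf_eq_of_lt_two ht.2).symm.trans (hf t ht.1)
  have hτ1 := one_le_of_forall_eq_mul_hallPdf hα hτ one_le_two hf₂
  have hA := sum_weight_eq_of_forall_eq_mul_hallPdf hτ hτ1 one_lt_two hf₂
  have hτ2 := eq_one_or_le_of_forall_eq_mul_hallPdf hα hτ hA hf₂
  obtain ⟨K, C, hKC⟩ := exists_tenTheta_eq_log_of_scales hτ hτ2 hA hf
  obtain ⟨u, hu, hτu⟩ := exists_gt_forall_le_or_le τ (16 / 3)
  have hv : 1 < 3 * min u 6 / 16 := by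
    have := lt_min hu (show (16 : ℝ) / 3 < 6 by norm_num)
    linarith
  refine ⟨K, K * log (16 / 3) + C, ?_⟩
  filter_upwards [Ioo_mem_nhdsGT hv] with s ⟨hs1, hsv⟩
  have hu6 := min_le_left u 6
  have h6 := min_le_right u 6
  have hs := hKC (16 / 3 * s) ⟨by linarith, by linarith⟩ fun i ↦
    (hτu i).imp_right fun h ↦ by linarith
  rw [show 3 * (16 / 3 * s) / 16 = s by ring, Real.log_mul (by norm_num) (by linarith)] at hs
  linear_combination hs

/-- The slope gap distribution of the balanced ten-tile origami is not a finite sum of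
scaled Hall distributions. -/
theorem tenTile_not_sum_of_halls :
    ¬ ∃ (n : ℕ) (α τ : Fin n → ℝ), 1 ≤ n ∧ (∀ i, 0 < α i) ∧ (∀ i, 0 < τ i) ∧
      ∀ t : ℝ, 0 < t → tenTilePdf t = ∑ i, α i * hallPdf (t / τ i) := by
  rintro ⟨n, α, τ, -, hα, hτ, hf⟩
  obtain ⟨K, C, hKC⟩ := exists_eventually_tenTheta_eq hα hτ hf
  exact not_eventually_tenTheta_eq K C hKC
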